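/- For each identifier oid ∈ OId, the object-specific residual residual₁(D, oid) = reach(D ↾ Σ(P^S_Σ ⇓ oid)) is equivalent to the original DATE D with respect to the set of ground traces of oid in the program: residual₁(D, oid) ≅_{P^S_Σ ⇓ oid} D. -/

import Mathlib

open Classical

/-- A property automaton over states `Q` and alphabet `E`: a deterministic and
total transition relation is represented as a transition function. -/
structure PA (Q : Type*) (E : Type*) where
  init : Q
  bad : Set Q
  next : Q → E → Q

namespace PA

variable {Q E : Type*}

/-- Iterated application of the transition function along a ground trace. -/
def run (π : PA Q E) (q : Q) (t : List E) : Q := t.foldl π.next q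

/-- A ground trace satisfies a property automaton iff no prefix of it leads
from the initial state to a bad state. -/
def Sat (t : List E) (π : PA Q E) : Prop :=
  ∀ t' : List E, t' <+: t → π.run π.init t' ∉ π.bad

/-- Equivalence of two property automata with respect to a set of ground traces. -/
def EquivOn (T : Set (List E)) (π π' : PA Q E) : Prop :=
  ∀ t ∈ T, Sat t π ↔ Sat t π'

end PA

/-- A static program: a set of static parametrised traces over identifiers `α`,
together with a must-alias equivalence relation and a may-alias relation. -/
structure SProg (α : Type*) (E : Type*) where
  traces : Set (List (α × E))
  must : α → α → Prop
  may : α → α → Prop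
  must_equiv : Equivalence must
  must_sub_may : ∀ {x y : α}, must x y → may x y

namespace SProg

variable {α E : Type*}

-- Projection of a static parametrised trace onto an identifier `x`,
-- yielding the set of possible ground traces.
open Classical in
noncomputable def proj (P : SProg α E) (x : α) : List (α × E) → Set (List E)
  | [] => {[]}
  | (x', e) :: st =>
      if P.must x x' then (e :: ·) '' P.proj x st
      else if P.may x x' then P.proj x st ∪ (e :: ·) '' P.proj x st
      else P.proj x st

/-- The projection of a static program onto a single identifier. -/
def projId (P : SProg α E) (x : α) : Set (List E) :=
  {t | ∃ st ∈ P.traces, t ∈ P.proj x st}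

/-- The projection of a static program onto all identifiers (`P ⇓ OId`). -/
def projAll (P : SProg α E) : Set (List E) :=
  {t | ∃ st ∈ P.traces, ∃ x : α, t ∈ P.proj x st}

end SProg

/-- Satisfaction of a property automaton by a static parametrised trace:
every projection onto every identifier satisfies the automaton. -/
def PA.SSat {α Q E : Type*} (P : SProg α E) (st : List (α × E)) (π : PA Q E) : Prop :=
  ∀ x : α, ∀ t ∈ P.proj x st, PA.Sat t π

/-- Equivalence of two property automata with respect to a static program. -/
def PA.SEquiv {α Q E : Type*} (P : SProg α E) (π π' : PA Q E) : Prop :=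
  ∀ st ∈ P.traces, PA.SSat P st π ↔ PA.SSat P st π'

/-- A transition of a DATE: source state, event, condition, action, target state. -/
structure DTrans (Q : Type*) (E : Type*) (Θ : Type*) where
  src : Q
  ev : E
  cond : Θ → Bool
  act : Θ → Θ
  tgt : Q

/-- A DATE (without timers/channels): states `Q`, events `E`, monitoring
variable states `Θ`, initial state, initial monitoring state, bad states,
and a transition relation. -/
structure DATE (Q : Type*) (E : Type*) (Θ : Type*) where
  init : Q
  th0 : Θ
  bad : Set Q
  delta : Set (DTrans Q E Θ)

namespace DATE

variable {Q E Θ : Type*}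

/-- Determinism: from each state, any two distinct transitions with the same
event have conditions that are never simultaneously true. -/
def Deterministic (D : DATE Q E Θ) : Prop :=
  ∀ d ∈ D.delta, ∀ d' ∈ D.delta,
    d.src = d'.src → d.ev = d'.ev → d ≠ d' →
      ∀ θ : Θ, ¬(d.cond θ = true ∧ d'.cond θ = true)

/-- The concrete transition function `Δ`. -/
noncomputable def step (D : DATE Q E Θ) (s : Q × Θ) (e : E) : Q × Θ :=
  if h : ∃ d ∈ D.delta, d.src = s.1 ∧ d.ev = e ∧ d.cond s.2 = true
  then (h.choose.tgt, h.choose.act s.2)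
  else s

/-- `Δ*`: iterated concrete transition function along a ground trace. -/
noncomputable def run (D : DATE Q E Θ) (s : Q × Θ) (t : List E) : Q × Θ :=
  t.foldl D.step s

/-- A ground trace satisfies a DATE iff no prefix of it drives `Δ*` from the
initial configuration into a bad state. -/
def Sat (t : List E) (D : DATE Q E Θ) : Prop :=
  ∀ t' : List E, t' <+: t → (D.run (D.init, D.th0) t').1 ∉ D.bad

/-- Equivalence of two DATEs with respect to a set of ground traces. -/
def EquivOn (T : Set (List E)) (D D' : DATE Q E Θ) : Prop :=
  ∀ t ∈ T, Sat t D ↔ Sat t D'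

/-- The static transition relation `q →e_approx q'`. -/
def ApproxStep (D : DATE Q E Θ) (q : Q) (e : E) (q' : Q) : Prop :=
  (∃ d ∈ D.delta, d.src = q ∧ d.ev = e ∧ d.tgt = q' ∧ ¬ ∀ θ : Θ, d.cond θ = false)
  ∨ (q' = q ∧ ¬ ∃ d ∈ D.delta, d.src = q ∧ d.ev = e ∧ d.tgt ≠ q ∧ ∀ θ : Θ, d.cond θ = true)

/-- The static transition function on sets of states. -/
def approxSet (D : DATE Q E Θ) (S : Set Q) (e : E) : Set Q :=
  {q' | ∃ q ∈ S, D.ApproxStep q e q'}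

/-- `approxΔ*`: iterated static transition function along a ground trace. -/
def approxRun (D : DATE Q E Θ) (S : Set Q) (t : List E) : Set Q :=
  t.foldl D.approxSet S

/-- `q ↪ q'`: `q'` is reachable from `q` via the static transition relation. -/
def Reach (D : DATE Q E Θ) (q q' : Q) : Prop :=
  ∃ t : List E, q' ∈ D.approxRun {q} t

/-- `badAfter(q)`: `q` is reachable from the initial state and can reach a bad state. -/
def BadAfter (D : DATE Q E Θ) (q : Q) : Prop :=
  D.Reach D.init q ∧ ∃ q' ∈ D.bad, D.Reach q q'

/-- `goodEntryPoint(q)`. -/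
def GoodEntryPoint (D : DATE Q E Θ) (q : Q) : Prop :=
  ¬ D.BadAfter q ∧ ∃ q' : Q, ∃ e : E, D.BadAfter q' ∧ D.ApproxStep q' e q

/-- `useful(q)`. -/
def Useful (D : DATE Q E Θ) (q : Q) : Prop :=
  D.BadAfter q ∨ D.GoodEntryPoint q

/-- Restriction of a DATE to a set of transitions (`D ↾ δ'`). -/
def restrict (D : DATE Q E Θ) (δ' : Set (DTrans Q E Θ)) : DATE Q E Θ :=
  { D with delta := D.delta ∩ δ' }

/-- The reachability-reduced DATE `reach(D)`: only useful states and
transitions between useful states are kept. -/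
def reachReduce (D : DATE Q E Θ) : DATE Q E Θ :=
  D.restrict {d | D.Useful d.src ∧ D.Useful d.tgt}

/-- Alphabet restriction `D ↾ Σ'`. -/
def alphaRestrict (D : DATE Q E Θ) (A : Set E) : DATE Q E Θ :=
  D.restrict {d | d.ev ∈ A}

/-- `Σ(T)`: the set of events occurring in some trace of `T`. -/
def eventsOf (T : Set (List E)) : Set E :=
  {e | ∃ t ∈ T, e ∈ t}

/-- Component-wise union of two DATEs (sharing initial state and initial
monitoring state). -/
def union (D₁ D₂ : DATE Q E Θ) : DATE Q E Θ :=
  { init := D₁.init, th0 := D₁.th0, bad := D₁.bad ∪ D₂.bad,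
    delta := D₁.delta ∪ D₂.delta }

/-- Component-wise union of a family of DATEs, with given initial state and
initial monitoring state. -/
def unionFamily {ι : Type*} (q0 : Q) (θ0 : Θ) (f : ι → DATE Q E Θ) : DATE Q E Θ :=
  { init := q0, th0 := θ0, bad := ⋃ i, (f i).bad, delta := ⋃ i, (f i).delta }

/-- A ground trace `t` uses a transition `d`. -/
def Uses (D : DATE Q E Θ) (t : List E) (d : DTrans Q E Θ) : Prop :=
  (¬ ∀ θ : Θ, d.cond θ = false) ∧
    ∃ t' : List E, (t' ++ [d.ev]) <+: t ∧ d.src ∈ D.approxRun {D.init} t'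

/-- Satisfaction of a DATE by a static parametrised trace. -/
def SSat {α : Type*} (P : SProg α E) (st : List (α × E)) (D : DATE Q E Θ) : Prop :=
  ∀ x : α, ∀ t ∈ P.proj x st, Sat t D

/-- Equivalence of two DATEs with respect to a static program. -/
def SEquiv {α : Type*} (P : SProg α E) (D D' : DATE Q E Θ) : Prop :=
  ∀ st ∈ P.traces, SSat P st D ↔ SSat P st D'

end DATE

/-- Translation of a property automaton into a DATE with `Θ = Unit`:
each transition `(q, e, q')` becomes `q —e|true↦skip→ q'`. -/
def PA.toDATE {Q E : Type*} (π : PA Q E) : DATE Q E Unit :=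
  { init := π.init, th0 := (), bad := π.bad,
    delta := {d | d.cond = (fun _ => true) ∧ d.act = id ∧ d.tgt = π.next d.src d.ev} }

/-- The flow-sensitive residual `residual₂(D, P)`. -/
def DATE.residual2 {α Q E Θ : Type*} (D : DATE Q E Θ) (P : SProg α E) : DATE Q E Θ :=
  (D.restrict {d | ∃ t ∈ P.projAll, D.Uses t d}).reachReduce

/-- Consecutive application of the flow-sensitive residual over a list of
static program over-approximations. -/
def DATE.residual2List {α Q E Θ : Type*} (D : DATE Q E Θ) :
    List (SProg α E) → DATE Q E Θ
  | [] => D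
  | P :: Ps => DATE.residual2List (D.residual2 P) Ps

/-! On the traces of `oid` every event lies in `Σ(P ⇓ oid)`, so by determinism the alphabet
restriction fires exactly the transitions `D` fires. The reachability reduction changes nothing
while the current state can still reach a bad state, since it then keeps every fireable
transition; once no bad state is statically reachable, neither automaton can reach one. -/

namespace DATE

variable {Q E Θ : Type*}

def SatFrom (X : DATE Q E Θ) (s : Q × Θ) (t : List E) : Prop :=
  ∀ t' : List E, t' <+: t → (X.run s t').1 ∉ X.bad

theorem satFrom_nil (X : DATE Q E Θ) (s : Q × Θ) : X.SatFrom s [] ↔ s.1 ∉ X.bad := by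
  simp [SatFrom, List.prefix_nil, run]

theorem satFrom_cons (X : DATE Q E Θ) (s : Q × Θ) (e : E) (t : List E) :
    X.SatFrom s (e :: t) ↔ s.1 ∉ X.bad ∧ X.SatFrom (X.step s e) t := by
  simp only [SatFrom, List.prefix_cons_iff]
  constructor
  · intro h
    exact ⟨h [] (Or.inl rfl), fun t' ht' => h (e :: t') (Or.inr ⟨t', rfl, ht'⟩)⟩
  · rintro ⟨hs, h⟩ t' (rfl | ⟨t', rfl, ht'⟩)
    exacts [hs, h t' ht']

theorem step_eq_of_mem {X : DATE Q E Θ} (hdet : X.Deterministic) {s : Q × Θ} {e : E}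
    {d : DTrans Q E Θ} (hd : d ∈ X.delta) (hsrc : d.src = s.1) (hev : d.ev = e)
    (hcond : d.cond s.2 = true) :
    X.step s e = (d.tgt, d.act s.2) := by
  have hex : ∃ d ∈ X.delta, d.src = s.1 ∧ d.ev = e ∧ d.cond s.2 = true :=
    ⟨d, hd, hsrc, hev, hcond⟩
  obtain ⟨hd', hsrc', hev', hcond'⟩ := hex.choose_spec
  have hchoose : hex.choose = d := by
    by_contra hne
    exact hdet _ hd' d hd (hsrc'.trans hsrc.symm) (hev'.trans hev.symm) hne s.2 ⟨hcond', hcond⟩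
  rw [step, dif_pos hex, hchoose]

theorem step_eq_self {X : DATE Q E Θ} {s : Q × Θ} {e : E}
    (h : ∀ d ∈ X.delta, d.src = s.1 → d.ev = e → d.cond s.2 = false) :
    X.step s e = s := by
  refine dif_neg ?_
  rintro ⟨d, hd, hsrc, hev, hcond⟩
  simp [h d hd hsrc hev] at hcond

theorem Deterministic.restrict {X : DATE Q E Θ} (hdet : X.Deterministic)
    (δ' : Set (DTrans Q E Θ)) : (X.restrict δ').Deterministic :=
  fun d (hd : d ∈ X.delta ∩ δ') d' (hd' : d' ∈ X.delta ∩ δ') => hdet d hd.1 d' hd'.1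

theorem step_restrict {X : DATE Q E Θ} (hdet : X.Deterministic) {δ' : Set (DTrans Q E Θ)}
    {s : Q × Θ} {e : E}
    (hkeep : ∀ d ∈ X.delta, d.src = s.1 → d.ev = e → d.cond s.2 = true → d ∈ δ') :
    (X.restrict δ').step s e = X.step s e := by
  by_cases hen : ∃ d ∈ X.delta, d.src = s.1 ∧ d.ev = e ∧ d.cond s.2 = true
  · obtain ⟨d, hd, hsrc, hev, hcond⟩ := hen
    rw [step_eq_of_mem hdet hd hsrc hev hcond,
      step_eq_of_mem (hdet.restrict δ') ⟨hd, hkeep d hd hsrc hev hcond⟩ hsrc hev hcond]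
  · push Not at hen
    have hoff : ∀ d ∈ X.delta, d.src = s.1 → d.ev = e → d.cond s.2 = false :=
      fun d hd hsrc hev => by simpa using hen d hd hsrc hev
    rw [step_eq_self hoff, step_eq_self (X := X.restrict δ') fun d hd => hoff d hd.1]

theorem run_restrict {X : DATE Q E Θ} (hdet : X.Deterministic) {δ' : Set (DTrans Q E Θ)}
    {t : List E} (hkeep : ∀ d ∈ X.delta, d.ev ∈ t → d ∈ δ') (s : Q × Θ) :
    (X.restrict δ').run s t = X.run s t := by
  induction t generalizing s with
  | nil => rfl
  | cons e t ih =>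
    have hstep : (X.restrict δ').step s e = X.step s e :=
      step_restrict hdet fun d hd _ hev _ => hkeep d hd (hev ▸ List.mem_cons_self)
    change (X.restrict δ').run ((X.restrict δ').step s e) t = X.run (X.step s e) t
    rw [hstep, ih fun d hd hev => hkeep d hd (List.mem_cons_of_mem e hev)]

theorem sat_alphaRestrict_iff {X : DATE Q E Θ} (hdet : X.Deterministic) {A : Set E}
    {t : List E} (ht : ∀ e ∈ t, e ∈ A) : Sat t (X.alphaRestrict A) ↔ Sat t X :=
  forall₂_congr fun t' ht' => by
    show ((X.restrict {d | d.ev ∈ A}).run (X.init, X.th0) t').1 ∉ X.bad ↔ _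
    rw [run_restrict (δ' := {d | d.ev ∈ A}) hdet fun d _ hev => ht d.ev (ht'.subset hev)]

theorem approxStep_step (X : DATE Q E Θ) (s : Q × Θ) (e : E) :
    X.ApproxStep s.1 e (X.step s e).1 := by
  by_cases hen : ∃ d ∈ X.delta, d.src = s.1 ∧ d.ev = e ∧ d.cond s.2 = true
  · obtain ⟨hd, hsrc, hev, hcond⟩ := hen.choose_spec
    rw [step, dif_pos hen]
    exact Or.inl ⟨_, hd, hsrc, hev, rfl, fun hoff => by simp [hoff s.2] at hcond⟩
  · rw [step, dif_neg hen]
    exact Or.inr ⟨rfl, fun ⟨d, hd, hsrc, hev, _, hon⟩ => hen ⟨d, hd, hsrc, hev, hon s.2⟩⟩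

/-- A transition dropped by a restriction can only turn a forced move into a self-loop. -/
theorem ApproxStep.of_restrict {X : DATE Q E Θ} {δ' : Set (DTrans Q E Θ)} {q q' : Q} {e : E}
    (h : (X.restrict δ').ApproxStep q e q') : X.ApproxStep q e q' ∨ q' = q := by
  rcases h with ⟨d, hd, hdq⟩ | ⟨rfl, -⟩
  exacts [Or.inl (Or.inl ⟨d, hd.1, hdq⟩), Or.inr rfl]

theorem approxRun_subset {X : DATE Q E Θ} {S R : Set Q} (hS : S ⊆ R)
    (hR : ∀ p ∈ R, ∀ e p', X.ApproxStep p e p' → p' ∈ R) (t : List E) :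
    X.approxRun S t ⊆ R := by
  induction t generalizing S with
  | nil => exact hS
  | cons e t ih =>
    exact ih fun p' ⟨p, hp, hstep⟩ => hR p (hS hp) e p' hstep

theorem Reach.refl (X : DATE Q E Θ) (q : Q) : X.Reach q q :=
  ⟨[], rfl⟩

theorem Reach.tail {X : DATE Q E Θ} {q q' q'' : Q} {e : E} (h : X.Reach q q')
    (hstep : X.ApproxStep q' e q'') : X.Reach q q'' := by
  obtain ⟨t, ht⟩ := h
  exact ⟨t ++ [e], by rw [approxRun, List.foldl_concat]; exact ⟨q', ht, hstep⟩⟩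

theorem Reach.trans {X : DATE Q E Θ} {q q' q'' : Q} (h : X.Reach q q')
    (h' : X.Reach q' q'') : X.Reach q q'' := by
  obtain ⟨t, ht⟩ := h'
  exact approxRun_subset (R := {p | X.Reach q p}) (Set.singleton_subset_iff.2 h)
    (fun _ hp _ _ => hp.tail) t ht

theorem Reach.of_restrict {X : DATE Q E Θ} {δ' : Set (DTrans Q E Θ)} {q q' : Q}
    (h : (X.restrict δ').Reach q q') : X.Reach q q' := by
  obtain ⟨t, ht⟩ := h
  refine approxRun_subset (R := {p | X.Reach q p}) (Set.singleton_subset_iff.2 (Reach.refl X q))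
    ?_ t ht
  intro p hp e p' hstep
  rcases hstep.of_restrict with hstep | rfl
  exacts [hp.tail hstep, hp]

theorem reach_run (X : DATE Q E Θ) (s : Q × Θ) (t : List E) : X.Reach s.1 (X.run s t).1 := by
  induction t generalizing s with
  | nil => exact Reach.refl X s.1
  | cons e t ih => exact ((Reach.refl X s.1).tail (X.approxStep_step s e)).trans (ih _)

theorem satFrom_of_not_reach_bad {X : DATE Q E Θ} {s : Q × Θ}
    (h : ∀ b ∈ X.bad, ¬ X.Reach s.1 b) (t : List E) : X.SatFrom s t :=
  fun t' _ hbad => h _ hbad (X.reach_run s t')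

/-- From a state that can still reach a bad state, `reach(X)` keeps every fireable transition:
its source is `badAfter`, and its target is `badAfter` or a good entry point. -/
theorem step_reachReduce {X : DATE Q E Θ} (hdet : X.Deterministic) {s : Q × Θ}
    (hs : X.BadAfter s.1) (e : E) : X.reachReduce.step s e = X.step s e := by
  refine step_restrict hdet fun d hd hsrc hev hcond => ⟨hsrc ▸ Or.inl hs, ?_⟩
  have hstep : X.ApproxStep s.1 e d.tgt :=
    Or.inl ⟨d, hd, hsrc, hev, rfl, fun hoff => by simp [hoff s.2] at hcond⟩
  by_cases hbad : ∃ b ∈ X.bad, X.Reach d.tgt b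
  · exact Or.inl ⟨hs.1.tail hstep, hbad⟩
  · exact Or.inr ⟨fun h => hbad h.2, s.1, e, hs, hstep⟩

theorem satFrom_reachReduce_iff {X : DATE Q E Θ} (hdet : X.Deterministic) (t : List E)
    {s : Q × Θ} (hs : X.Reach X.init s.1) :
    X.reachReduce.SatFrom s t ↔ X.SatFrom s t := by
  induction t generalizing s with
  | nil => exact (X.reachReduce.satFrom_nil s).trans (X.satFrom_nil s).symm
  | cons e t ih =>
    by_cases hbad : ∃ b ∈ X.bad, X.Reach s.1 b
    · rw [satFrom_cons, satFrom_cons, step_reachReduce hdet ⟨hs, hbad⟩ e,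
        ih (hs.tail (X.approxStep_step s e))]
      rfl
    · push Not at hbad
      exact iff_of_true
        (satFrom_of_not_reach_bad (X := X.reachReduce)
          (fun b hb hr => hbad b hb hr.of_restrict) _)
        (satFrom_of_not_reach_bad hbad _)

theorem sat_reachReduce_iff {X : DATE Q E Θ} (hdet : X.Deterministic) (t : List E) :
    Sat t X.reachReduce ↔ Sat t X :=
  satFrom_reachReduce_iff hdet t (Reach.refl X X.init)

end DATE

/-- The object-specific residual
`residual₁(D, oid) = reach(D ↾ Σ(P^S_Σ ⇓ oid))` is equivalent to `D` with
respect to the ground traces of `oid` in the program. -/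
theorem residual1_equiv {α Q E Θ : Type*} (D : DATE Q E Θ)
    (hdet : D.Deterministic) (P : SProg α E) (oid : α) :
    DATE.EquivOn (P.projId oid)
      ((D.alphaRestrict (DATE.eventsOf (P.projId oid))).reachReduce) D := by
  intro t ht
  rw [DATE.sat_reachReduce_iff (X := D.alphaRestrict _) (hdet.restrict _)]
  exact DATE.sat_alphaRestrict_iff hdet fun e he => ⟨t, ht, he⟩
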